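/- arXiv:1409.5249 — 5 statements merged into one kernel-verified Lean document; each statement's English description precedes it below -/
import Mathlib

section
/- Let f : ℝ^N → ℝ and g : ℝ^N → ℝ^m be continuous, let (y_j) be a sequence in ℝ^m with y_j ≥ 0, and let x_j be a local minimizer of x ↦ f(x) + Σ_k exp((y_j)_k g_k(x)), all with a common radius of local minimality r > 0. Suppose x_j → x̄, g(x̄) ≤ 0, and (y_j)_k · g_k(x_j) → 0 for each k. Then x̄ is a local minimizer of f subject to g(x) ≤ 0. -/
open Filter Metric Real Topology

/-!
Penalty terms `exp (y_k g_k z)` are at most `1` at feasible points `z`, while along the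
minimizers they tend to `1`. Every `z` close to `x̄` lies within the common radius of all but
finitely many `x_j`, so `f (x_j) + Σ_k exp (y_{j,k} g_k (x_j)) ≤ f z + m` eventually, and the
left side tends to `f x̄ + m`.
-/

theorem sum_exp_mul_le_card {ι : Type*} [Fintype ι] {a b : ι → ℝ}
    (ha : ∀ i, 0 ≤ a i) (hb : ∀ i, b i ≤ 0) :
    ∑ i, exp (a i * b i) ≤ Fintype.card ι := by
  calc ∑ i, exp (a i * b i) ≤ ∑ _i : ι, (1 : ℝ) :=
        Finset.sum_le_sum fun i _ =>
          exp_le_one_iff.mpr (mul_nonpos_of_nonneg_of_nonpos (ha i) (hb i))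
    _ = Fintype.card ι := by simp

theorem tendsto_sum_exp_of_tendsto_zero {ι α : Type*} [Fintype ι] {l : Filter α}
    {t : α → ι → ℝ} (ht : ∀ i, Tendsto (fun a => t a i) l (𝓝 0)) :
    Tendsto (fun a => ∑ i, exp (t a i)) l (𝓝 (Fintype.card ι)) := by
  have := tendsto_finsetSum Finset.univ fun i _ => (continuous_exp.tendsto 0).comp (ht i)
  simpa [Function.comp_def] using this

theorem le_of_tendsto_of_isMinOn_closedBall {X α : Type*} [PseudoMetricSpace X]
    {l : Filter α} [l.NeBot] {F : α → X → ℝ} {x : α → X} {xbar z : X} {r a b : ℝ}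
    (hconv : Tendsto x l (𝓝 xbar)) (hmin : ∀ j, IsMinOn (F j) (closedBall (x j) r) (x j))
    (hlim : Tendsto (fun j => F j (x j)) l (𝓝 a)) (hz : z ∈ ball xbar r)
    (hb : ∀ᶠ j in l, F j z ≤ b) : a ≤ b := by
  have hnear : ∀ᶠ j in l, dist z (x j) < r :=
    (tendsto_const_nhds.dist hconv).eventually (gt_mem_nhds (mem_ball.mp hz))
  refine le_of_tendsto hlim ?_
  filter_upwards [hnear, hb] with j hj hjb
  exact (isMinOn_iff.mp (hmin j) z (mem_closedBall.mpr hj.le)).trans hjb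

theorem stmt_1_general {N m : ℕ}
    (f : EuclideanSpace ℝ (Fin N) → ℝ) (g : Fin m → EuclideanSpace ℝ (Fin N) → ℝ)
    (hf : Continuous f)
    (y : ℕ → Fin m → ℝ) (hy : ∀ j k, 0 ≤ y j k)
    (x : ℕ → EuclideanSpace ℝ (Fin N)) (r : ℝ) (hr : 0 < r)
    (hmin : ∀ j, ∀ z, dist z (x j) ≤ r →
      f (x j) + ∑ k, Real.exp (y j k * g k (x j)) ≤ f z + ∑ k, Real.exp (y j k * g k z))
    (xbar : EuclideanSpace ℝ (Fin N))
    (hconv : Filter.Tendsto x Filter.atTop (nhds xbar))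
    (hslack : ∀ k, Filter.Tendsto (fun j => y j k * g k (x j)) Filter.atTop (nhds 0)) :
    IsLocalMinOn f {x | ∀ k, g k x ≤ 0} xbar := by
  have hlim :
      Tendsto (fun j => f (x j) + ∑ k, exp (y j k * g k (x j))) atTop (𝓝 (f xbar + m)) := by
    simpa using (hf.tendsto xbar |>.comp hconv).add (tendsto_sum_exp_of_tendsto_zero hslack)
  filter_upwards [nhdsWithin_le_nhds (ball_mem_nhds xbar hr), self_mem_nhdsWithin]
    with z hz hz_feas
  have hpenalty : ∀ j, f z + ∑ k, exp (y j k * g k z) ≤ f z + m := fun j => by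
    simpa using sum_exp_mul_le_card (hy j) hz_feas
  have := le_of_tendsto_of_isMinOn_closedBall (F := fun j z => f z + ∑ k, exp (y j k * g k z))
    hconv (fun j => isMinOn_iff.mpr (hmin j)) hlim hz (Eventually.of_forall hpenalty)
  linarith

theorem stmt_1 {N m : ℕ}
    (f : EuclideanSpace ℝ (Fin N) → ℝ) (g : Fin m → EuclideanSpace ℝ (Fin N) → ℝ)
    (hf : Continuous f) (hg : ∀ k, Continuous (g k))
    (y : ℕ → Fin m → ℝ) (hy : ∀ j k, 0 ≤ y j k)
    (x : ℕ → EuclideanSpace ℝ (Fin N)) (r : ℝ) (hr : 0 < r)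
    (hmin : ∀ j, ∀ z, dist z (x j) ≤ r →
      f (x j) + ∑ k, Real.exp (y j k * g k (x j)) ≤ f z + ∑ k, Real.exp (y j k * g k z))
    (xbar : EuclideanSpace ℝ (Fin N))
    (hconv : Filter.Tendsto x Filter.atTop (nhds xbar))
    (hfeas : ∀ k, g k xbar ≤ 0)
    (hslack : ∀ k, Filter.Tendsto (fun j => y j k * g k (x j)) Filter.atTop (nhds 0)) :
    IsLocalMinOn f {x | ∀ k, g k x ≤ 0} xbar :=
  stmt_1_general f g hf y hy x r hr hmin xbar hconv hslack
end

section
/- Let f, g : ℝ^N → ℝ be twice continuously differentiable, and let x : (0,∞) → ℝ^N be a differentiable map such that for each y > 0, x(y) is a local minimizer of z ↦ f(z) + exp(y·g(z)) (so both the first-order condition ∇f(x) + y e^{y g(x)} ∇g(x) = 0 and positive semidefiniteness of the Hessian of L(·,y) at x(y) hold). Then for every y > 0, (1 + y·g(x(y))) · (d/dy)[g(x(y))] ≤ 0. -/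
open scoped RealInnerProductSpace

/-!
With `L_y(z) = f z + exp (y * g z)` we have `∇L_y = ∇f + y e^{y g} ∇g`. Differentiating the
first-order condition `∇L_y(x y) = 0` in `y`, the chain-rule term of the coefficient
`y e^{y g(x y)}` cancels against the rank-one part of `∇²L_y`, leaving
`∇²L_y(x y) x'(y) = -e^{y g} (1 + y g) ∇g(x y)`. Pairing with `x'(y)`, where `⟪∇g, x'⟫ = (g ∘ x)'`,
the Hessian inequality reads `0 ≤ -e^{y g} (1 + y g) (g ∘ x)'`.
-/

open Filter Topology

section

variable {E : Type*} [NormedAddCommGroup E] [InnerProductSpace ℝ E] [CompleteSpace E]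

theorem ContDiff.differentiable_gradient {f : E → ℝ} {n : WithTop ℕ∞}
    (hf : ContDiff ℝ n f) (hn : 2 ≤ n) : Differentiable ℝ (gradient f) :=
  (InnerProductSpace.toDual ℝ E).symm.toContinuousLinearEquiv.differentiable.comp
    ((hf.fderiv_right (m := 1) hn).differentiable one_ne_zero)

theorem HasGradientAt.exp_const_mul {g : E → ℝ} {G z : E} (hg : HasGradientAt g G z) (y : ℝ) :
    HasGradientAt (fun w => Real.exp (y * g w)) ((y * Real.exp (y * g z)) • G) z := by
  rw [hasGradientAt_iff_hasFDerivAt] at hg ⊢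
  refine (hg.const_mul y).exp.congr_fderiv ?_
  rw [map_smul, smul_smul, mul_comm]

theorem gradient_add_exp_const_mul {f g : E → ℝ} {z : E} (hf : DifferentiableAt ℝ f z)
    (hg : DifferentiableAt ℝ g z) (y : ℝ) :
    gradient (fun w => f w + Real.exp (y * g w)) z
      = gradient f z + (y * Real.exp (y * g z)) • gradient g z := by
  refine HasGradientAt.gradient ?_
  rw [hasGradientAt_iff_hasFDerivAt, map_add]
  exact (hasGradientAt_iff_hasFDerivAt.mp hf.hasGradientAt).add
    (hasGradientAt_iff_hasFDerivAt.mp (hg.hasGradientAt.exp_const_mul y))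

theorem fderiv_gradient_add_exp_const_mul_apply {f g : E → ℝ} {z : E}
    (hf : Differentiable ℝ f) (hg : Differentiable ℝ g) (hGf : DifferentiableAt ℝ (gradient f) z)
    (hGg : DifferentiableAt ℝ (gradient g) z) (y : ℝ) (v : E) :
    fderiv ℝ (fun z => gradient (fun w => f w + Real.exp (y * g w)) z) z v
      = fderiv ℝ (gradient f) z v + (y * Real.exp (y * g z)) • fderiv ℝ (gradient g) z v
        + (y ^ 2 * Real.exp (y * g z) * ⟪gradient g z, v⟫) • gradient g z := by
  have hL : (fun z => gradient (fun w => f w + Real.exp (y * g w)) z)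
      = fun z => gradient f z + (y * Real.exp (y * g z)) • gradient g z :=
    funext fun z => gradient_add_exp_const_mul (hf z) (hg z) y
  have hc := ((hg z).hasFDerivAt.const_mul y).exp.const_mul y
  have hH : HasFDerivAt (fun z => gradient f z + (y * Real.exp (y * g z)) • gradient g z) _ z :=
    hGf.hasFDerivAt.add (hc.smul hGg.hasFDerivAt)
  rw [hL, hH.fderiv]
  simp only [add_apply, smul_apply, ContinuousLinearMap.smulRight_apply, smul_eq_mul,
    inner_gradient_left]
  module

theorem HasDerivAt.gradient_add_mul_exp_mul_smul_gradient {f g : E → ℝ} {x : ℝ → E} {v : E}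
    {y : ℝ} (hx : HasDerivAt x v y) (hg : DifferentiableAt ℝ g (x y))
    (hGf : DifferentiableAt ℝ (gradient f) (x y)) (hGg : DifferentiableAt ℝ (gradient g) (x y)) :
    HasDerivAt (fun s => gradient f (x s) + (s * Real.exp (s * g (x s))) • gradient g (x s))
      (fderiv ℝ (gradient f) (x y) v + (y * Real.exp (y * g (x y))) • fderiv ℝ (gradient g) (x y) v
        + (Real.exp (y * g (x y)) * (1 + y * g (x y) + y ^ 2 * ⟪gradient g (x y), v⟫))
          • gradient g (x y)) y := by
  have hgx : HasDerivAt (fun s => g (x s)) ⟪gradient g (x y), v⟫ y := by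
    rw [inner_gradient_left]; exact hg.hasFDerivAt.comp_hasDerivAt y hx
  have hc : HasDerivAt (fun s => s * Real.exp (s * g (x s)))
      (1 * Real.exp (y * g (x y))
        + y * (Real.exp (y * g (x y)) * (1 * g (x y) + y * ⟪gradient g (x y), v⟫))) y :=
    (hasDerivAt_id' y).mul ((hasDerivAt_id' y).mul hgx).exp
  refine ((hGf.hasFDerivAt.comp_hasDerivAt y hx).add
    (hc.smul (hGg.hasFDerivAt.comp_hasDerivAt y hx))).congr_deriv ?_
  rw [Function.comp_apply]
  module

theorem fderiv_gradient_add_exp_const_mul_apply_of_eventually_eq_zero {f g : E → ℝ}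
    {x : ℝ → E} {v : E} {y : ℝ} (hf : Differentiable ℝ f) (hg : Differentiable ℝ g)
    (hGf : DifferentiableAt ℝ (gradient f) (x y)) (hGg : DifferentiableAt ℝ (gradient g) (x y))
    (hx : HasDerivAt x v y)
    (hfoc : ∀ᶠ s in 𝓝 y, gradient f (x s) + (s * Real.exp (s * g (x s))) • gradient g (x s) = 0) :
    fderiv ℝ (fun z => gradient (fun w => f w + Real.exp (y * g w)) z) (x y) v
      = -(Real.exp (y * g (x y)) * (1 + y * g (x y))) • gradient g (x y) := by
  have hzero := ((hx.gradient_add_mul_exp_mul_smul_gradient (hg _) hGf hGg).congr_of_eventuallyEq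
    (hfoc.mono fun _ h => h.symm)).unique (hasDerivAt_const y 0)
  rw [fderiv_gradient_add_exp_const_mul_apply hf hg hGf hGg]
  linear_combination (norm := module) hzero

end

theorem stmt_2 {N : ℕ}
    (f g : EuclideanSpace ℝ (Fin N) → ℝ)
    (hf : ContDiff ℝ 2 f) (hg : ContDiff ℝ 2 g)
    (x : ℝ → EuclideanSpace ℝ (Fin N))
    (hx : ∀ y ∈ Set.Ioi (0 : ℝ), DifferentiableAt ℝ x y)
    (hfoc : ∀ y ∈ Set.Ioi (0 : ℝ),
      gradient f (x y) + (y * Real.exp (y * g (x y))) • gradient g (x y) = 0)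
    (hhess : ∀ y ∈ Set.Ioi (0 : ℝ), ∀ v : EuclideanSpace ℝ (Fin N),
      0 ≤ ⟪v, fderiv ℝ (fun z => gradient (fun w => f w + Real.exp (y * g w)) z) (x y) v⟫) :
    ∀ y ∈ Set.Ioi (0 : ℝ),
      (1 + y * g (x y)) * deriv (fun s => g (x s)) y ≤ 0 := by
  intro y hy
  have hgd := hg.differentiable two_ne_zero
  have hxy := (hx y hy).hasDerivAt
  have hgx : deriv (fun s => g (x s)) y = ⟪gradient g (x y), deriv x y⟫ := by
    rw [inner_gradient_left]; exact ((hgd _).hasFDerivAt.comp_hasDerivAt y hxy).deriv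
  have hHv := fderiv_gradient_add_exp_const_mul_apply_of_eventually_eq_zero
    (hf.differentiable two_ne_zero) hgd (hf.differentiable_gradient le_rfl _)
    (hg.differentiable_gradient le_rfl _) hxy (eventually_of_mem (isOpen_Ioi.mem_nhds hy) hfoc)
  have hpsd := hhess y hy (deriv x y)
  rw [hHv, inner_smul_right, real_inner_comm, ← hgx] at hpsd
  nlinarith [Real.exp_pos (y * g (x y))]
end

section
/- Let f, g : ℝ^N → ℝ be twice continuously differentiable and convex, and let x : (0,∞) → ℝ^N be a differentiable map satisfying for each y > 0 the stationarity condition ∇f(x(y)) + G(y)∇g(x(y)) = 0, where G(y) = y·e^{y g(x(y))}. Then for every y > 0, G'(y) · (d/dy)[g(x(y))] ≤ 0. -/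
open Set Filter Topology InnerProductSpace

/-! Stationarity and convexity make `x y` a global minimiser of `f + G y * g`. Comparing the
minimality of `x y` and `x z` gives `(G z - G y) * (g (x z) - g (x y)) ≤ 0`: `G` and `g ∘ x` move in
opposite directions, so every product of their difference quotients at `y` is nonpositive, and so
is its limit `G' y * (g ∘ x)' y`. -/

theorem ConvexOn.isMinOn_univ_of_hasFDerivAt_zero {E : Type*} [NormedAddCommGroup E]
    [NormedSpace ℝ E] {F : E → ℝ} {a : E} (hc : ConvexOn ℝ univ F)
    (hF : HasFDerivAt F (0 : E →L[ℝ] ℝ) a) :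
    IsMinOn F univ a := by
  refine isMinOn_univ_iff.mpr fun b => ?_
  set L : ℝ →ᵃ[ℝ] E := AffineMap.lineMap a b
  have hconv : ConvexOn ℝ univ (F ∘ L) := by
    simpa using hc.comp_affineMap L
  have hder : HasDerivAt (F ∘ L) 0 0 := by
    simpa using (AffineMap.lineMap_apply_zero (k := ℝ) a b ▸ hF).comp_hasDerivAt (0 : ℝ)
      AffineMap.hasDerivAt_lineMap
  simpa [L, slope_def_field] using
    hconv.le_slope_of_hasDerivWithinAt (mem_univ 0) (mem_univ 1) one_pos hder.hasDerivWithinAt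

theorem isMinOn_add_mul_of_gradient_add_smul_eq_zero {F : Type*} [NormedAddCommGroup F]
    [InnerProductSpace ℝ F] [CompleteSpace F] {f g : F → ℝ} {a : F} {c : ℝ}
    (hf : DifferentiableAt ℝ f a) (hg : DifferentiableAt ℝ g a)
    (hfc : ConvexOn ℝ univ f) (hgc : ConvexOn ℝ univ g) (hc : 0 ≤ c)
    (h : gradient f a + c • gradient g a = 0) :
    IsMinOn (fun z => f z + c * g z) univ a := by
  have hconv : ConvexOn ℝ univ (fun z => f z + c * g z) := hfc.add (hgc.smul hc)
  refine hconv.isMinOn_univ_of_hasFDerivAt_zero ?_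
  have hF := (hasGradientAt_iff_hasFDerivAt.mp hf.hasGradientAt).add
    ((hasGradientAt_iff_hasFDerivAt.mp hg.hasGradientAt).const_mul c)
  rwa [← map_smul, ← map_add, h, map_zero] at hF

theorem sub_mul_sub_nonpos_of_isMinOn_add_mul {α : Type*} {f g : α → ℝ} {s t : ℝ} {a b : α}
    (ha : IsMinOn (fun z => f z + s * g z) univ a)
    (hb : IsMinOn (fun z => f z + t * g z) univ b) :
    (s - t) * (g a - g b) ≤ 0 := by
  have hab := isMinOn_univ_iff.mp ha b
  have hba := isMinOn_univ_iff.mp hb a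
  linarith

theorem deriv_mul_deriv_nonpos {φ ψ : ℝ → ℝ} {y : ℝ}
    (h : ∀ᶠ z in 𝓝 y, (φ z - φ y) * (ψ z - ψ y) ≤ 0) :
    deriv φ y * deriv ψ y ≤ 0 := by
  by_cases hφ : DifferentiableAt ℝ φ y
  · by_cases hψ : DifferentiableAt ℝ ψ y
    · have hslope := (hasDerivAt_iff_tendsto_slope.mp hφ.hasDerivAt).mul
        (hasDerivAt_iff_tendsto_slope.mp hψ.hasDerivAt)
      refine le_of_tendsto hslope ?_
      filter_upwards [eventually_nhdsWithin_of_eventually_nhds h] with z hz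
      rw [slope_def_field, slope_def_field, div_mul_div_comm, ← sq]
      exact div_nonpos_of_nonpos_of_nonneg hz (sq_nonneg _)
    · simp [deriv_zero_of_not_differentiableAt hψ]
  · simp [deriv_zero_of_not_differentiableAt hφ]

theorem stmt_3_general {N : ℕ}
    (f g : EuclideanSpace ℝ (Fin N) → ℝ)
    (hf : ContDiff ℝ 2 f) (hg : ContDiff ℝ 2 g)
    (hfc : ConvexOn ℝ Set.univ f) (hgc : ConvexOn ℝ Set.univ g)
    (x : ℝ → EuclideanSpace ℝ (Fin N))
    (G : ℝ → ℝ) (hG : ∀ y ∈ Set.Ioi (0 : ℝ), G y = y * Real.exp (y * g (x y)))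
    (hfoc : ∀ y ∈ Set.Ioi (0 : ℝ),
      gradient f (x y) + G y • gradient g (x y) = 0) :
    ∀ y ∈ Set.Ioi (0 : ℝ),
      deriv G y * deriv (fun s => g (x s)) y ≤ 0 := by
  have hmin : ∀ s ∈ Ioi (0 : ℝ), IsMinOn (fun z => f z + G s * g z) univ (x s) := fun s hs =>
    isMinOn_add_mul_of_gradient_add_smul_eq_zero (hf.differentiable two_ne_zero _)
      (hg.differentiable two_ne_zero _) hfc hgc
      (hG s hs ▸ mul_nonneg (le_of_lt hs) (Real.exp_pos _).le) (hfoc s hs)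
  intro y hy
  apply deriv_mul_deriv_nonpos
  filter_upwards [Ioi_mem_nhds hy] with z hz
  exact sub_mul_sub_nonpos_of_isMinOn_add_mul (hmin z hz) (hmin y hy)

theorem stmt_3 {N : ℕ}
    (f g : EuclideanSpace ℝ (Fin N) → ℝ)
    (hf : ContDiff ℝ 2 f) (hg : ContDiff ℝ 2 g)
    (hfc : ConvexOn ℝ Set.univ f) (hgc : ConvexOn ℝ Set.univ g)
    (x : ℝ → EuclideanSpace ℝ (Fin N))
    (hx : ∀ y ∈ Set.Ioi (0 : ℝ), DifferentiableAt ℝ x y)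
    (G : ℝ → ℝ) (hG : ∀ y ∈ Set.Ioi (0 : ℝ), G y = y * Real.exp (y * g (x y)))
    (hfoc : ∀ y ∈ Set.Ioi (0 : ℝ),
      gradient f (x y) + G y • gradient g (x y) = 0) :
    ∀ y ∈ Set.Ioi (0 : ℝ),
      deriv G y * deriv (fun s => g (x s)) y ≤ 0 :=
  stmt_3_general f g hf hg hfc hgc x G hG hfoc
end

section
/- Let ḡ : (0,∞) → ℝ be a continuously differentiable function satisfying (1 + y·ḡ(y))·ḡ'(y) ≤ 0 for all y > 0. If ḡ(ȳ) < 0 for some ȳ > 0, then ḡ(y) < 0 for all y ≥ ȳ. -/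
/-!
Suppose `gbar` became nonnegative somewhere to the right of `ybar`, and let `y₀` be the first such
point. Since `gbar y₀ ≥ 0`, the factor `1 + y * gbar y` is positive near `y₀`, so the hypothesis
forces `gbar' ≤ 0` there and `gbar` is antitone near `y₀`. Then `gbar ≥ gbar y₀ ≥ 0` just to the
left of `y₀`, contradicting the choice of `y₀`.
-/

open Set Filter Topology

theorem ContinuousOn.exists_first_nonneg {f : ℝ → ℝ} {a b : ℝ} (hab : a ≤ b)
    (hf : ContinuousOn f (Icc a b)) (ha : f a < 0) (hb : 0 ≤ f b) :
    ∃ x₀ ∈ Ioc a b, 0 ≤ f x₀ ∧ ∀ x ∈ Ico a x₀, f x < 0 := by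
  set S := Icc a b ∩ f ⁻¹' Ici 0
  have hS : sInf S ∈ S :=
    (hf.preimage_isClosed_of_isClosed isClosed_Icc isClosed_Ici).csInf_mem
      ⟨b, right_mem_Icc.2 hab, hb⟩ ⟨a, fun x hx => hx.1.1⟩
  obtain ⟨⟨hax₀, hx₀b⟩, hfx₀⟩ := hS
  refine ⟨sInf S, ⟨lt_of_le_of_ne hax₀ ?_, hx₀b⟩, hfx₀, fun x ⟨hax, hxx₀⟩ => ?_⟩
  · intro ha_eq
    exact (not_le.2 ha) (ha_eq ▸ hfx₀)
  · by_contra! hfx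
    exact (not_le.2 hxx₀) (csInf_le ⟨a, fun y hy => hy.1.1⟩ ⟨⟨hax, hxx₀.le.trans hx₀b⟩, hfx⟩)

theorem eventually_nhdsLT_ge_of_eventually_deriv_nonpos {f : ℝ → ℝ} {x : ℝ}
    (h : ∀ᶠ y in 𝓝 x, DifferentiableAt ℝ f y ∧ deriv f y ≤ 0) :
    ∀ᶠ c in 𝓝[<] x, f x ≤ f c := by
  obtain ⟨ε, hε, hball⟩ := Metric.eventually_nhds_iff_ball.1 h
  have hdiff : DifferentiableOn ℝ f (Metric.ball x ε) := fun y hy =>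
    (hball y hy).1.differentiableWithinAt
  have hanti : AntitoneOn f (Metric.ball x ε) :=
    antitoneOn_of_deriv_nonpos (convex_ball x ε) hdiff.continuousOn
      (by rwa [Metric.isOpen_ball.interior_eq])
      (by simpa only [Metric.isOpen_ball.interior_eq] using fun y hy => (hball y hy).2)
  filter_upwards [Ioo_mem_nhdsLT (sub_lt_self x hε)] with c hc
  have hc_ball : c ∈ Metric.ball x ε := by
    rw [Metric.mem_ball, Real.dist_eq, abs_lt]
    constructor <;> linarith [hc.1, hc.2]
  exact hanti hc_ball (Metric.mem_ball_self hε) hc.2.le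

theorem eventually_deriv_nonpos_of_nonneg {gbar : ℝ → ℝ}
    (hdiff : DifferentiableOn ℝ gbar (Ioi 0))
    (hineq : ∀ y ∈ Ioi (0 : ℝ), (1 + y * gbar y) * deriv gbar y ≤ 0)
    {x : ℝ} (hx : 0 < x) (hgx : 0 ≤ gbar x) :
    ∀ᶠ y in 𝓝 x, DifferentiableAt ℝ gbar y ∧ deriv gbar y ≤ 0 := by
  have hcont : ContinuousAt (fun y => 1 + y * gbar y) x :=
    continuousAt_const.add (continuousAt_id.mul (hdiff.continuousOn.continuousAt (Ioi_mem_nhds hx)))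
  have hfactor : 0 < 1 + x * gbar x := by positivity
  filter_upwards [Ioi_mem_nhds hx, hcont.eventually (lt_mem_nhds hfactor)] with y hy hpos
  exact ⟨hdiff.differentiableAt (Ioi_mem_nhds hy), nonpos_of_mul_nonpos_right (hineq y hy) hpos⟩

theorem stmt_4 (gbar : ℝ → ℝ)
    (hsmooth : ContDiffOn ℝ 1 gbar (Set.Ioi 0))
    (hineq : ∀ y ∈ Set.Ioi (0 : ℝ), (1 + y * gbar y) * deriv gbar y ≤ 0)
    (ybar : ℝ) (hybar : 0 < ybar) (hneg : gbar ybar < 0) :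
    ∀ y, ybar ≤ y → gbar y < 0 := by
  have hdiff : DifferentiableOn ℝ gbar (Ioi 0) := hsmooth.differentiableOn one_ne_zero
  by_contra! ⟨y₁, hy₁, hgy₁⟩
  obtain ⟨y₀, ⟨hy₀, -⟩, hgy₀, hbefore⟩ :=
    (hdiff.continuousOn.mono fun y hy => hybar.trans_le hy.1).exists_first_nonneg hy₁ hneg hgy₁
  obtain ⟨c, hgc, hc⟩ :=
    ((eventually_nhdsLT_ge_of_eventually_deriv_nonpos
      (eventually_deriv_nonpos_of_nonneg hdiff hineq (hybar.trans hy₀) hgy₀)).and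
      (Ioo_mem_nhdsLT hy₀)).exists
  linarith [hbefore c ⟨hc.1.le, hc.2⟩]
end

section
/- Let G : (0,∞) → (0,∞) be continuous with G(y) = y·e^{y·ḡ(y)} for a continuously differentiable ḡ satisfying (1 + y ḡ(y)) ḡ'(y) ≤ 0 for all y > 0. If G(ȳ) ≤ ȳ for some ȳ > 0, then G(y) ≤ y for all y ≥ ȳ. -/
/-!
Since `y > 0`, `y * exp (y * ḡ y) ≤ y` is equivalent to `ḡ y ≤ 0`, so it suffices that `ḡ` stays
nonpositive to the right of `ȳ`. Wherever `ḡ t > 0` (with `t > 0`) the factor `1 + t ḡ t` is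
positive, so `ḡ' t ≤ 0`. If `ḡ` became positive at some `x > ȳ`, then on the interval from the
last point `z ∈ [ȳ, x]` with `ḡ z ≤ 0` up to `x` it would be positive, hence
nonincreasing, giving `0 < ḡ x ≤ ḡ z ≤ 0`.
-/

open Set Real

theorem mul_exp_mul_le_self_iff {y a : ℝ} (hy : 0 < y) : y * exp (y * a) ≤ y ↔ a ≤ 0 := by
  rw [mul_le_iff_le_one_right hy, exp_le_one_iff]
  exact ⟨fun h => nonpos_of_mul_nonpos_right h hy, mul_nonpos_of_nonneg_of_nonpos hy.le⟩

theorem nonpos_on_Icc_of_deriv_nonpos_of_pos {f : ℝ → ℝ} {a b : ℝ}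
    (hf : ContinuousOn f (Icc a b)) (hf' : DifferentiableOn ℝ f (Ioo a b))
    (hderiv : ∀ t ∈ Ioo a b, 0 < f t → deriv f t ≤ 0) (ha : f a ≤ 0) :
    ∀ x ∈ Icc a b, f x ≤ 0 := by
  intro x hx
  by_contra! hfx
  have hsub : Icc a x ⊆ Icc a b := Icc_subset_Icc_right hx.2
  set S := Icc a x ∩ f ⁻¹' Iic 0
  have hS : IsCompact S :=
    isCompact_Icc.of_isClosed_subset
      ((hf.mono hsub).preimage_isClosed_of_isClosed isClosed_Icc isClosed_Iic) inter_subset_left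
  obtain ⟨z, ⟨⟨haz, hzx⟩, hfz⟩, hzmax⟩ := hS.exists_isGreatest ⟨a, ⟨left_mem_Icc.2 hx.1, ha⟩⟩
  have hpos : ∀ t ∈ Ioc z x, 0 < f t := fun t ht =>
    not_le.1 fun h => ht.1.not_ge (hzmax ⟨⟨haz.trans ht.1.le, ht.2⟩, h⟩)
  have hsub' : Icc z x ⊆ Icc a b := Icc_subset_Icc haz hx.2
  have hanti : AntitoneOn f (Icc z x) := by
    apply antitoneOn_of_deriv_nonpos (convex_Icc z x) (hf.mono hsub')
    all_goals rw [interior_Icc]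
    · exact hf'.mono (Ioo_subset_Ioo haz hx.2)
    · exact fun t ht => hderiv t (Ioo_subset_Ioo haz hx.2 ht) (hpos t ⟨ht.1, ht.2.le⟩)
  have := hanti (left_mem_Icc.2 hzx) (right_mem_Icc.2 hzx) hzx
  exact (hfx.trans_le this).not_ge hfz

theorem stmt_6_general (G gbar : ℝ → ℝ)
    (hgs : ContDiffOn ℝ 1 gbar (Set.Ioi 0))
    (hGdef : ∀ y ∈ Set.Ioi (0 : ℝ), G y = y * Real.exp (y * gbar y))
    (hineq : ∀ y ∈ Set.Ioi (0 : ℝ), (1 + y * gbar y) * deriv gbar y ≤ 0)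
    (ybar : ℝ) (hybar : 0 < ybar) (hle : G ybar ≤ ybar) :
    ∀ y, ybar ≤ y → G y ≤ y := by
  intro y hy
  have hIcc : Icc ybar y ⊆ Ioi 0 := fun t ht => hybar.trans_le ht.1
  have hg_ybar : gbar ybar ≤ 0 := (mul_exp_mul_le_self_iff hybar).1 (hGdef ybar hybar ▸ hle)
  have hderiv : ∀ t ∈ Ioo ybar y, 0 < gbar t → deriv gbar t ≤ 0 := fun t ht hgt =>
    have ht0 : 0 < t := hIcc (Ioo_subset_Icc_self ht)
    nonpos_of_mul_nonpos_right (hineq t ht0) (by positivity)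
  have hg_y : gbar y ≤ 0 :=
    nonpos_on_Icc_of_deriv_nonpos_of_pos (hgs.continuousOn.mono hIcc)
      ((hgs.differentiableOn one_ne_zero).mono (Ioo_subset_Icc_self.trans hIcc)) hderiv
      hg_ybar y (right_mem_Icc.2 hy)
  rw [hGdef y (hybar.trans_le hy)]
  exact (mul_exp_mul_le_self_iff (hybar.trans_le hy)).2 hg_y

theorem stmt_6 (G gbar : ℝ → ℝ)
    (hGc : ContinuousOn G (Set.Ioi 0))
    (hgs : ContDiffOn ℝ 1 gbar (Set.Ioi 0))
    (hGdef : ∀ y ∈ Set.Ioi (0 : ℝ), G y = y * Real.exp (y * gbar y))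
    (hineq : ∀ y ∈ Set.Ioi (0 : ℝ), (1 + y * gbar y) * deriv gbar y ≤ 0)
    (ybar : ℝ) (hybar : 0 < ybar) (hle : G ybar ≤ ybar) :
    ∀ y, ybar ≤ y → G y ≤ y :=
  stmt_6_general G gbar hgs hGdef hineq ybar hybar hle
end
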